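/- arXiv:2402.08828 — 3 statements merged into one kernel-verified Lean document; each statement's English description precedes it below -/
import Mathlib

section
/- Under the setting of the value-difference identity, assume additionally the margin bound: there is c > 0 and α ∈ (0,1] such that P(f f* < 0) ≤ c·(E[𝟙{f f* < 0}·|2η - 1|])^α, where 2η - 1 = (r¹ - r⁻¹)/(r¹ + r⁻¹). If r¹ + r⁻¹ ≥ c_r everywhere, then P(f f* < 0) ≤ c·(ΔV(f)/c_r)^α. -/
open MeasureTheory

/- The margin bound controls the misclassification probability by the integral of
`|2η - 1| = |r¹ - r⁻¹| / (r¹ + r⁻¹)` over the misclassified set, and since `r¹ + r⁻¹ ≥ c_r`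
this integrand is at most `|r¹ - r⁻¹| / c_r`, whose integral over that set is `ΔV(f) / c_r`.
Monotonicity of `t ↦ c · t ^ α` on `[0, ∞)` finishes the proof. -/

lemma abs_div_le_abs_div_of_le {x s c : ℝ} (hc : 0 < c) (hcs : c ≤ s) :
    |x / s| ≤ |x| / c := by
  rw [abs_div, abs_of_pos (hc.trans_le hcs)]
  exact div_le_div_of_nonneg_left (abs_nonneg x) hc hcs

lemma integral_mul_abs_div_le {Ω : Type*} [MeasurableSpace Ω] {μ : Measure Ω}
    {e u w : Ω → ℝ} {c : ℝ} (hc : 0 < c) (hw : ∀ ω, c ≤ w ω) (he : ∀ ω, 0 ≤ e ω)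
    (hint : Integrable (fun ω => e ω * |u ω|) μ) :
    ∫ ω, e ω * |u ω / w ω| ∂μ ≤ (∫ ω, e ω * |u ω| ∂μ) / c := by
  rw [← integral_div]
  refine integral_mono_of_nonneg (.of_forall fun ω => ?_) (hint.div_const c) (.of_forall fun ω => ?_)
  · exact mul_nonneg (he ω) (abs_nonneg _)
  · simp only [mul_div_assoc]
    exact mul_le_mul_of_nonneg_left (abs_div_le_abs_div_of_le hc (hw ω)) (he ω)

theorem misclassification_rate_bound_general {Ω : Type*} [MeasurableSpace Ω]
    (P : Measure Ω) [IsProbabilityMeasure P]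
    (r₁ r₂ : Ω → ℝ) (rbar : ℝ)
    (hr₁ : Measurable r₁) (hr₂ : Measurable r₂)
    (hr₁b : ∀ ω, r₁ ω ∈ Set.Icc 0 rbar) (hr₂b : ∀ ω, r₂ ω ∈ Set.Icc 0 rbar)
    (cr : ℝ) (hcr : 0 < cr) (hsum : ∀ ω, cr ≤ r₁ ω + r₂ ω)
    (f fstar : Ω → ℝ) (hf : Measurable f) (hfs : Measurable fstar)
    (c α : ℝ) (hc : 0 < c) (hα0 : 0 < α)
    (hmargin : (P {ω | f ω * fstar ω < 0}).toReal ≤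
      c * (∫ ω, (if f ω * fstar ω < 0 then (1 : ℝ) else 0) *
            |(r₁ ω - r₂ ω) / (r₁ ω + r₂ ω)| ∂P) ^ α) :
    (P {ω | f ω * fstar ω < 0}).toReal ≤
      c * ((∫ ω, (if f ω * fstar ω < 0 then (1 : ℝ) else 0) *
            |r₁ ω - r₂ ω| ∂P) / cr) ^ α := by
  set e : Ω → ℝ := fun ω => if f ω * fstar ω < 0 then 1 else 0
  have he_meas : Measurable e :=
    Measurable.ite (measurableSet_lt (hf.mul hfs) measurable_const) measurable_const
      measurable_const
  have he_nonneg : ∀ ω, 0 ≤ e ω := fun ω => by positivity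
  have he_le_one : ∀ ω, ‖e ω‖ ≤ 1 := fun ω => by
    simp only [e]; split_ifs <;> norm_num
  have hgap : ∀ ω, |r₁ ω - r₂ ω| ∈ Set.Icc 0 rbar := fun ω =>
    ⟨abs_nonneg _, by simpa [Real.dist_eq] using Real.dist_le_of_mem_Icc (hr₁b ω) (hr₂b ω)⟩
  have hΔV_int : Integrable (fun ω => e ω * |r₁ ω - r₂ ω|) P :=
    (Integrable.of_mem_Icc 0 rbar (hr₁.sub hr₂).abs.aemeasurable (.of_forall hgap)).bdd_mul
      he_meas.aestronglyMeasurable (.of_forall he_le_one)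
  calc (P {ω | f ω * fstar ω < 0}).toReal
      ≤ c * (∫ ω, e ω * |(r₁ ω - r₂ ω) / (r₁ ω + r₂ ω)| ∂P) ^ α := hmargin
    _ ≤ c * ((∫ ω, e ω * |r₁ ω - r₂ ω| ∂P) / cr) ^ α := by
      refine mul_le_mul_of_nonneg_left (Real.rpow_le_rpow ?_ ?_ hα0.le) hc.le
      · exact integral_nonneg fun ω => mul_nonneg (he_nonneg ω) (abs_nonneg _)
      · exact integral_mul_abs_div_le hcr hsum he_nonneg hΔV_int

/-- Under the margin (Tsybakov-type) bound, the misclassification probability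
is bounded by `c · (ΔV(f)/c_r)^α`. -/
theorem misclassification_rate_bound {Ω : Type*} [MeasurableSpace Ω]
    (P : Measure Ω) [IsProbabilityMeasure P]
    (r₁ r₂ : Ω → ℝ) (rbar : ℝ)
    (hr₁ : Measurable r₁) (hr₂ : Measurable r₂)
    (hr₁b : ∀ ω, r₁ ω ∈ Set.Icc 0 rbar) (hr₂b : ∀ ω, r₂ ω ∈ Set.Icc 0 rbar)
    (cr : ℝ) (hcr : 0 < cr) (hsum : ∀ ω, cr ≤ r₁ ω + r₂ ω)
    (f fstar : Ω → ℝ) (hf : Measurable f) (hfs : Measurable fstar)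
    (hfv : ∀ ω, f ω = -1 ∨ f ω = 1) (hfsv : ∀ ω, fstar ω = -1 ∨ fstar ω = 1)
    (hopt : ∀ ω, r₁ ω ≠ r₂ ω → fstar ω = if r₂ ω < r₁ ω then 1 else -1)
    (c α : ℝ) (hc : 0 < c) (hα0 : 0 < α) (hα1 : α ≤ 1)
    (hmargin : (P {ω | f ω * fstar ω < 0}).toReal ≤
      c * (∫ ω, (if f ω * fstar ω < 0 then (1 : ℝ) else 0) *
            |(r₁ ω - r₂ ω) / (r₁ ω + r₂ ω)| ∂P) ^ α) :
    (P {ω | f ω * fstar ω < 0}).toReal ≤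
      c * ((∫ ω, (if f ω * fstar ω < 0 then (1 : ℝ) else 0) *
            |r₁ ω - r₂ ω| ∂P) / cr) ^ α :=
  misclassification_rate_bound_general P r₁ r₂ rbar hr₁ hr₂ hr₁b hr₂b cr hcr hsum f fstar hf hfs c α
    hc hα0 hmargin
end

section
/- Change of measure identity: let X be a random variable on (Ω, ℱ, P) with density h on ℝ^d, A ∈ {-1,1} with conditional probability π(a; x) = P(A = a | X = x) > 0, and nonnegative measurable rewards r^{(a)}(x) with g(x) := r^{(1)}(x) + r^{(-1)}(x) and C := ∫ g(x) h(x) dx > 0. Define h'(x) = g(x)h(x)/C and π'(a; x) = r^{(a)}(x)/g(x) when g(x) > 0 (and 1/2 otherwise). Then for any bounded measurable loss φ and measurable f, E[ (r^{(A)}(X)/π(A;X)) φ(A f(X)) ] = C · E'[ φ(A f(X)) ], where E' denotes expectation under density h' for X and conditional law π' for A. -/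
/-!
The identity holds already for the integrands. Averaging over `A ~ π(·; x)` cancels the
inverse-propensity weight, leaving `r⁽¹⁾ φ(f) + r⁽⁻¹⁾ φ(-f)`; and the tilted policy satisfies
`g π'(a; ·) = r⁽ᵃ⁾`, also where `g = 0`, since there both rewards vanish. The factor `g / C`
in `h'` then turns `C · E'` into the same integrand.
-/

open MeasureTheory

lemma mul_add_mul_eq_tilted_policy {r₁ r₂ : ℝ} (hr₁ : 0 ≤ r₁) (hr₂ : 0 ≤ r₂) (u v : ℝ) :
    r₁ * u + r₂ * v =
      (u * (if 0 < r₁ + r₂ then r₁ / (r₁ + r₂) else 1 / 2) +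
        v * (if 0 < r₁ + r₂ then r₂ / (r₁ + r₂) else 1 / 2)) * (r₁ + r₂) := by
  split_ifs with hg
  · field_simp
  · obtain rfl : r₁ = 0 := by linarith
    obtain rfl : r₂ = 0 := by linarith
    simp

lemma div_mul_mul_cancel_right {p : ℝ} (hp : p ≠ 0) (r u : ℝ) : r / p * u * p = r * u := by
  field_simp

theorem change_of_measure_identity_general (d : ℕ)
    (r₁ rneg h : (Fin d → ℝ) → ℝ) (π : ℝ → (Fin d → ℝ) → ℝ)
    (hr₁ : ∀ x, 0 ≤ r₁ x) (hrneg : ∀ x, 0 ≤ rneg x)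
    (p₀ : ℝ) (hp₀ : 0 < p₀)
    (hπ : ∀ a x, (a = 1 ∨ a = -1) → p₀ < π a x)
    (C : ℝ) (hCpos : 0 < C)
    (h' : (Fin d → ℝ) → ℝ) (hh' : ∀ x, h' x = (r₁ x + rneg x) * h x / C)
    (π' : ℝ → (Fin d → ℝ) → ℝ)
    (hπ'1 : ∀ x, π' 1 x = if 0 < r₁ x + rneg x then r₁ x / (r₁ x + rneg x) else 1 / 2)
    (hπ'neg : ∀ x, π' (-1) x =
      if 0 < r₁ x + rneg x then rneg x / (r₁ x + rneg x) else 1 / 2)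
    (φ : ℝ → ℝ)
    (f : (Fin d → ℝ) → ℝ) :
    (∫ x, ((r₁ x / π 1 x) * φ (f x) * π 1 x +
           (rneg x / π (-1) x) * φ (-(f x)) * π (-1) x) * h x) =
      C * ∫ x, (φ (f x) * π' 1 x + φ (-(f x)) * π' (-1) x) * h' x := by
  have hπ_ne : ∀ a x, (a = 1 ∨ a = -1) → π a x ≠ 0 := fun a x ha =>
    (hp₀.trans (hπ a x ha)).ne'
  rw [← integral_const_mul]
  congr 1 with x
  calc _ = (r₁ x * φ (f x) + rneg x * φ (-f x)) * h x := by
        rw [div_mul_mul_cancel_right (hπ_ne 1 x (.inl rfl)),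
          div_mul_mul_cancel_right (hπ_ne (-1) x (.inr rfl))]
    _ = (φ (f x) * π' 1 x + φ (-f x) * π' (-1) x) * (r₁ x + rneg x) * h x := by
        rw [hπ'1, hπ'neg, mul_add_mul_eq_tilted_policy (hr₁ x) (hrneg x)]
    _ = C * ((φ (f x) * π' 1 x + φ (-f x) * π' (-1) x) * h' x) := by
        rw [hh']
        field_simp

/-- Change of measure identity for outcome-weighted learning: the
propensity-weighted expected loss equals `C` times the expected loss under the
tilted covariate density `h'(x) = g(x)h(x)/C` and the policy
`π'(a;x) = r^{(a)}(x)/g(x)`. -/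
theorem change_of_measure_identity (d : ℕ)
    (r₁ rneg h : (Fin d → ℝ) → ℝ) (π : ℝ → (Fin d → ℝ) → ℝ)
    (hr₁ : ∀ x, 0 ≤ r₁ x) (hrneg : ∀ x, 0 ≤ rneg x)
    (hh : ∀ x, 0 ≤ h x)
    (p₀ : ℝ) (hp₀ : 0 < p₀)
    (hπ : ∀ a x, (a = 1 ∨ a = -1) → p₀ < π a x)
    (hπsum : ∀ x, π 1 x + π (-1) x = 1)
    (hmr₁ : Measurable r₁) (hmrneg : Measurable rneg) (hmh : Measurable h)
    (hmπ : ∀ a, Measurable (π a))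
    (C : ℝ) (hC : C = ∫ x, (r₁ x + rneg x) * h x) (hCpos : 0 < C)
    (h' : (Fin d → ℝ) → ℝ) (hh' : ∀ x, h' x = (r₁ x + rneg x) * h x / C)
    (π' : ℝ → (Fin d → ℝ) → ℝ)
    (hπ'1 : ∀ x, π' 1 x = if 0 < r₁ x + rneg x then r₁ x / (r₁ x + rneg x) else 1 / 2)
    (hπ'neg : ∀ x, π' (-1) x =
      if 0 < r₁ x + rneg x then rneg x / (r₁ x + rneg x) else 1 / 2)
    (φ : ℝ → ℝ) (B : ℝ) (hφb : ∀ t, |φ t| ≤ B) (hmφ : Measurable φ)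
    (f : (Fin d → ℝ) → ℝ) (hmf : Measurable f) :
    (∫ x, ((r₁ x / π 1 x) * φ (f x) * π 1 x +
           (rneg x / π (-1) x) * φ (-(f x)) * π (-1) x) * h x) =
      C * ∫ x, (φ (f x) * π' 1 x + φ (-(f x)) * π' (-1) x) * h' x :=
  change_of_measure_identity_general d r₁ rneg h π hr₁ hrneg p₀ hp₀ hπ C hCpos h' hh' π' hπ'1 hπ'neg
    φ f
end

section
/- For the mollified sign approximation: if |F(x) - s(x)| ≤ 8·exp(-σ² ω(x)²/(2d)) pointwise, where s takes values in {-1,1}, and the distribution of X satisfies E[exp(-t·ω(X)²)] ≤ C·t^{-qd/2} for all t > 0 (geometric noise condition), then E|F(X) - s(X)| ≤ 8C·(2d)^{qd/2}·σ^{-qd}. -/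
/-!
With `t = σ² / (2d)` the hypothesis reads `|F - s| ≤ 8 exp(-t ω²)`; integrating it against the law
of `X` and applying the geometric noise condition at this `t` gives `8 C t^{-qd/2}`, which is the
claimed bound.
-/

open MeasureTheory

theorem Real.sq_div_rpow_neg_half {σ D : ℝ} (hσ : 0 ≤ σ) (hD : 0 ≤ D) (a : ℝ) :
    (σ ^ 2 / D) ^ (-a / 2) = D ^ (a / 2) * σ ^ (-a) := by
  have hσ_sq : (σ ^ 2) ^ (-a / 2) = σ ^ (-a) := by
    rw [← Real.rpow_natCast σ 2, ← Real.rpow_mul hσ]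
    congr 1
    push_cast
    ring
  rw [Real.div_rpow (sq_nonneg σ) hD, hσ_sq, neg_div, Real.rpow_neg hD]
  field_simp

theorem AEMeasurable.integrable_exp_neg_mul_sq {Ω : Type*} [MeasurableSpace Ω] {μ : Measure Ω}
    [IsFiniteMeasure μ] {Y : Ω → ℝ} (hY : AEMeasurable Y μ) {t : ℝ} (ht : 0 ≤ t) :
    Integrable (fun x => Real.exp (-t * Y x ^ 2)) μ := by
  refine .of_bound ((hY.pow_const 2).const_mul (-t)).exp.aestronglyMeasurable 1 ?_
  refine Filter.Eventually.of_forall fun x => ?_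
  rw [Real.norm_of_nonneg (Real.exp_pos _).le, Real.exp_le_one_iff]
  nlinarith [sq_nonneg (Y x)]

theorem mollified_sign_approximation_general (d : ℕ) (hd : 1 ≤ d)
    {Ω : Type*} [MeasurableSpace Ω] (μ : Measure Ω) [IsProbabilityMeasure μ]
    (X : Ω → (Fin d → ℝ)) (hX : Measurable X)
    (ω : (Fin d → ℝ) → ℝ) (hω : Measurable ω)
    (F s : (Fin d → ℝ) → ℝ)
    (σ : ℝ) (hσ : 0 < σ) (q : ℝ) (C : ℝ)
    (happrox : ∀ x, |F x - s x| ≤ 8 * Real.exp (-σ ^ 2 * ω x ^ 2 / (2 * d)))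
    (hnoise : ∀ t : ℝ, 0 < t →
      (∫ ω', Real.exp (-t * ω (X ω') ^ 2) ∂μ) ≤ C * t ^ (-(q * d) / 2)) :
    (∫ ω', |F (X ω') - s (X ω')| ∂μ) ≤
      8 * C * (2 * d : ℝ) ^ (q * d / 2) * σ ^ (-(q * d)) := by
  set t : ℝ := σ ^ 2 / (2 * d)
  have ht : 0 < t := by positivity
  have hbound : ∀ x, |F x - s x| ≤ 8 * Real.exp (-t * ω x ^ 2) := fun x => by
    simpa only [t, neg_mul, neg_div, mul_div_right_comm] using happrox x
  have hint := ((hω.comp hX).aemeasurable (μ := μ)).integrable_exp_neg_mul_sq ht.le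
  calc (∫ ω', |F (X ω') - s (X ω')| ∂μ)
      ≤ ∫ ω', 8 * Real.exp (-t * ω (X ω') ^ 2) ∂μ :=
        integral_mono_of_nonneg (.of_forall fun _ => abs_nonneg _) (hint.const_mul 8)
          (.of_forall fun _ => hbound _)
    _ = 8 * ∫ ω', Real.exp (-t * ω (X ω') ^ 2) ∂μ := integral_const_mul _ _
    _ ≤ 8 * (C * t ^ (-(q * d) / 2)) := by gcongr; exact hnoise t ht
    _ = 8 * C * (2 * d : ℝ) ^ (q * d / 2) * σ ^ (-(q * d)) := by
        rw [Real.sq_div_rpow_neg_half hσ.le (by positivity)]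
        ring

/-- Under the geometric noise condition, the mollified sign approximation
error satisfies `E|F(X) - s(X)| ≤ 8C (2d)^{qd/2} σ^{-qd}`. -/
theorem mollified_sign_approximation (d : ℕ) (hd : 1 ≤ d)
    {Ω : Type*} [MeasurableSpace Ω] (μ : Measure Ω) [IsProbabilityMeasure μ]
    (X : Ω → (Fin d → ℝ)) (hX : Measurable X)
    (ω : (Fin d → ℝ) → ℝ) (hω : Measurable ω) (hωnn : ∀ x, 0 ≤ ω x)
    (F s : (Fin d → ℝ) → ℝ) (hF : Measurable F) (hs : Measurable s)
    (hFb : ∀ x, F x ∈ Set.Icc (-1 : ℝ) 1)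
    (hsv : ∀ x, s x = -1 ∨ s x = 1)
    (σ : ℝ) (hσ : 0 < σ) (q : ℝ) (hq : 0 < q) (C : ℝ) (hC : 0 < C)
    (happrox : ∀ x, |F x - s x| ≤ 8 * Real.exp (-σ ^ 2 * ω x ^ 2 / (2 * d)))
    (hnoise : ∀ t : ℝ, 0 < t →
      (∫ ω', Real.exp (-t * ω (X ω') ^ 2) ∂μ) ≤ C * t ^ (-(q * d) / 2)) :
    (∫ ω', |F (X ω') - s (X ω')| ∂μ) ≤
      8 * C * (2 * d : ℝ) ^ (q * d / 2) * σ ^ (-(q * d)) :=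
  mollified_sign_approximation_general d hd μ X hX ω hω F s σ hσ q C happrox hnoise
end
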